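/- Let $X$ be a Banach function space over $(S,\mu)$ that is order continuous, let $M$ be the Hardy–Littlewood maximal operator, and suppose the lattice maximal operator $\widetilde{M}$ is bounded on $L^p(\mathbb{R}^d;X)$ with norm $A$. Then for every $k \in \mathcal{K}$ and every simple $f : \mathbb{R}^d \to X$ one has the pointwise a.e. lattice inequality $|k * f| \leq \widetilde{M} f$, and consequently $\|k*f\|_{L^p(\mathbb{R}^d;X)} \leq A \|f\|_{L^p(\mathbb{R}^d;X)}$ uniformly in $k \in \mathcal{K}$. -/

import Mathlib

open MeasureTheory ENNReal Filter

/-- A Banach function space over a σ-finite measure space, modelled by its norm functional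
`N : (α → ℝ) → ℝ≥0∞` (with `N f = ∞` meaning `f ∉ X`): `N` is monotone in the pointwise order
on absolute values (compatibility and the ideal property), a norm, has a weak order unit, and
has the Fatou property. -/
structure BanachFunctionSpace (α : Type*) [MeasurableSpace α] (μ : Measure α) : Type _ where
  N : (α → ℝ) → ℝ≥0∞
  mono : ∀ {f g : α → ℝ}, (∀ᵐ x ∂μ, |f x| ≤ |g x|) → N f ≤ N g
  triangle : ∀ f g : α → ℝ, N (f + g) ≤ N f + N g
  norm_smul : ∀ (c : ℝ) (f : α → ℝ), N (c • f) = ENNReal.ofReal |c| * N f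
  eq_zero : ∀ f : α → ℝ, N f = 0 → ∀ᵐ x ∂μ, f x = 0
  weak_unit : ∃ ξ : α → ℝ, (∀ x, 0 < ξ x) ∧ N ξ < ∞
  fatou : ∀ (f : ℕ → α → ℝ) (g : α → ℝ), (∀ n x, 0 ≤ f n x) →
    (∀ x, Monotone fun n => f n x) →
    (∀ x, Tendsto (fun n => f n x) atTop (nhds (g x))) → N g = ⨆ n, N (f n)

/-- `(∑ j |v j|^s)^{1/s}` for `s ∈ [1,∞]` (supremum if `s = ∞`). -/
noncomputable def lpSumR (s : ℝ≥0∞) {n : ℕ} (v : Fin n → ℝ) : ℝ :=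
  if s = ∞ then ⨆ j, |v j| else (∑ j, |v j| ^ s.toReal) ^ (1 / s.toReal)

/-- `(∑ j (v j)^s)^{1/s}` in `ℝ≥0∞`, for `s ∈ [1,∞]` (supremum if `s = ∞`). -/
noncomputable def lpSumE (s : ℝ≥0∞) {n : ℕ} (v : Fin n → ℝ≥0∞) : ℝ≥0∞ :=
  if s = ∞ then ⨆ j, v j else (∑ j, v j ^ s.toReal) ^ (1 / s.toReal)

/-- `ℓ^s`-boundedness with constant `C` of a family `Γ` of operators, with respect to norm
functionals `NX`, `NY`. -/
def EllSBounded {α β : Type*} (NX : (α → ℝ) → ℝ≥0∞) (NY : (β → ℝ) → ℝ≥0∞)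
    (Γ : Set ((α → ℝ) → β → ℝ)) (s : ℝ≥0∞) (C : ℝ≥0∞) : Prop :=
  ∀ (n : ℕ) (T : Fin n → (α → ℝ) → β → ℝ), (∀ j, T j ∈ Γ) →
    ∀ f : Fin n → α → ℝ,
      NY (fun x => lpSumR s fun j => T j (f j) x) ≤ C * NX (fun x => lpSumR s fun j => f j x)

/-- `p`-convexity (constant `1`) of a norm functional, `p ∈ [1,∞]`. -/
def PConvex {α : Type*} (N : (α → ℝ) → ℝ≥0∞) (p : ℝ≥0∞) : Prop :=
  ∀ (n : ℕ) (ξ : Fin n → α → ℝ),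
    N (fun x => lpSumR p fun j => ξ j x) ≤ lpSumE p fun j => N (ξ j)

/-- Order continuity of a norm functional: `0 ≤ fₙ ↑ g` with `g` in the space implies
`N (g - fₙ) → 0`. -/
def OrderCont {α : Type*} (N : (α → ℝ) → ℝ≥0∞) : Prop :=
  ∀ (f : ℕ → α → ℝ) (g : α → ℝ), (∀ n x, 0 ≤ f n x) → (∀ x, Monotone fun n => f n x) →
    (∀ x, Tendsto (fun n => f n x) atTop (nhds (g x))) → N g < ∞ →
    Tendsto (fun n => N (g - f n)) atTop (nhds 0)

/-- The Köthe (associate) norm of the dual of a Banach function space with norm functional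
`N`, realized on measurable functions `u`. -/
noncomputable def kotheDual {α : Type*} [MeasurableSpace α] (μ : Measure α)
    (N : (α → ℝ) → ℝ≥0∞) (u : α → ℝ) : ℝ≥0∞ :=
  ⨆ f : {f : α → ℝ // N f ≤ 1}, ∫⁻ x, (‖f.1 x‖₊ : ℝ≥0∞) * ‖u x‖₊ ∂μ

/-- The norm functional of the `s`-concavification `X^s`. -/
noncomputable def concavification {α : Type*} (N : (α → ℝ) → ℝ≥0∞) (s : ℝ)
    (f : α → ℝ) : ℝ≥0∞ :=
  (N fun x => |f x| ^ (1 / s)) ^ s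

/-- `S` is the adjoint of `T` with respect to the integral pairings on `μ` and `ν`. -/
def IsAdjointOp {α β : Type*} [MeasurableSpace α] [MeasurableSpace β]
    (μ : Measure α) (ν : Measure β) (T : (α → ℝ) → β → ℝ) (S : (β → ℝ) → α → ℝ) : Prop :=
  ∀ (f : α → ℝ) (g : β → ℝ), ∫ x, T f x * g x ∂ν = ∫ x, f x * S g x ∂μ

/-- An axis-parallel cube in `ℝ^d`. -/
def IsCube {d : ℕ} (Q : Set (EuclideanSpace ℝ (Fin d))) : Prop :=
  ∃ (a : Fin d → ℝ) (r : ℝ), 0 < r ∧ Q = {x | ∀ i, x i ∈ Set.Icc (a i) (a i + r)}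

/-- The (uncentered, over cubes) Hardy–Littlewood maximal operator. -/
noncomputable def maximalOp {d : ℕ} (f : EuclideanSpace ℝ (Fin d) → ℂ)
    (x : EuclideanSpace ℝ (Fin d)) : ℝ≥0∞ :=
  ⨆ Q : {Q : Set (EuclideanSpace ℝ (Fin d)) // IsCube Q ∧ x ∈ Q},
    (∫⁻ y in Q.1, ‖f y‖₊) / volume Q.1

/-- The class `𝒦` of integrable kernels `k` with `|k| * |f| ≤ M f` a.e. for
all simple `f : ℝ^d → ℂ`. -/
def MemK {d : ℕ} (k : EuclideanSpace ℝ (Fin d) → ℝ) : Prop :=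
  Integrable k ∧ ∀ f : SimpleFunc (EuclideanSpace ℝ (Fin d)) ℂ,
    ∀ᵐ x, (∫⁻ y, ENNReal.ofReal |k (x - y)| * ‖f y‖₊) ≤ maximalOp (⇑f) x

/-- The lattice Hardy–Littlewood maximal operator `M̃`, for functions on `ℝ^d` with values in a
function lattice over `α`: the averages are taken pointwise in `α`. -/
noncomputable def latticeM {d : ℕ} {α : Type*}
    (f : EuclideanSpace ℝ (Fin d) → α → ℝ) (x : EuclideanSpace ℝ (Fin d)) (a : α) : ℝ≥0∞ :=
  ⨆ Q : {Q : Set (EuclideanSpace ℝ (Fin d)) // IsCube Q ∧ x ∈ Q},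
    (∫⁻ y in Q.1, ‖f y a‖₊) / volume Q.1

/-- The `L^p(ℝ^d;X)` norm of an `X`-valued function, `X` given by a norm functional `N`. -/
noncomputable def lpNormX {d : ℕ} {α : Type*} (N : (α → ℝ) → ℝ≥0∞) (p : ℝ)
    (f : EuclideanSpace ℝ (Fin d) → α → ℝ) : ℝ≥0∞ :=
  (∫⁻ x, (N (f x)) ^ p) ^ (1 / p)


/-!
Since `f` takes finitely many values, every function `y ↦ φ (f y)` is a simple function, and
the defining inequality of `𝒦` applied to the countably many `φ` with rational values on the
range of `f` holds simultaneously off one null set of `x`. Approximating `|φ|` from above by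
such rational `φ` up to `ε`, which moves every cube average by at most `ε`, gives
`|k| * |φ ∘ f| ≤ M (φ ∘ f)` at those `x` for every `φ`, in particular for all evaluations
`w ↦ w a` at once. This is the lattice inequality `|k * f| ≤ M̃ f`; the `L^p(X)` bound follows
from it by the ideal property of `X` and the boundedness of `M̃`.
-/

section MaximalOp

variable {d : ℕ}

theorem latticeM_eq_maximalOp {α : Type*} (f : EuclideanSpace ℝ (Fin d) → α → ℝ)
    (x : EuclideanSpace ℝ (Fin d)) (a : α) :
    latticeM f x a = maximalOp (fun y => (f y a : ℂ)) x := by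
  simp only [latticeM, maximalOp, Complex.nnnorm_real]

theorem maximalOp_le_add_of_norm_le_add {f g : EuclideanSpace ℝ (Fin d) → ℂ} {ε : ℝ}
    (h : ∀ y, ‖g y‖ ≤ ‖f y‖ + ε) (x : EuclideanSpace ℝ (Fin d)) :
    maximalOp g x ≤ maximalOp f x + ENNReal.ofReal ε := by
  have hpt : ∀ y, (‖g y‖₊ : ℝ≥0∞) ≤ ‖f y‖₊ + ENNReal.ofReal ε := fun y => by
    rw [← enorm_eq_nnnorm, ← enorm_eq_nnnorm, ← ofReal_norm, ← ofReal_norm]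
    exact (ENNReal.ofReal_le_ofReal (h y)).trans ENNReal.ofReal_add_le
  refine iSup_le fun Q => ?_
  calc (∫⁻ y in Q.1, ‖g y‖₊) / volume Q.1
      ≤ (∫⁻ y in Q.1, (‖f y‖₊ + ENNReal.ofReal ε)) / volume Q.1 := by
        gcongr with y
        exact hpt y
    _ = (∫⁻ y in Q.1, ‖f y‖₊) / volume Q.1 + ENNReal.ofReal ε * volume Q.1 / volume Q.1 := by
        rw [lintegral_add_right _ measurable_const, setLIntegral_const, ENNReal.add_div]
    _ ≤ maximalOp f x + ENNReal.ofReal ε :=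
        add_le_add (le_iSup (fun Q : {Q // IsCube Q ∧ x ∈ Q} =>
          (∫⁻ y in Q.1, ‖f y‖₊) / volume Q.1) Q) (ENNReal.div_le_of_le_mul le_rfl)

theorem maximalOp_le_of_norm_le {g : EuclideanSpace ℝ (Fin d) → ℂ} {C : ℝ}
    (h : ∀ y, ‖g y‖ ≤ C) (x : EuclideanSpace ℝ (Fin d)) :
    maximalOp g x ≤ ENNReal.ofReal C := by
  simpa [maximalOp] using maximalOp_le_add_of_norm_le_add (f := 0) (by simpa using h) x

theorem MeasureTheory.SimpleFunc.latticeM_lt_top {α : Type*}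
    (f : SimpleFunc (EuclideanSpace ℝ (Fin d)) (α → ℝ)) (x : EuclideanSpace ℝ (Fin d)) (a : α) :
    latticeM (fun y => f y) x a < ∞ := by
  obtain ⟨C, hC⟩ := (f.map fun w => w a).exists_forall_norm_le
  rw [latticeM_eq_maximalOp]
  exact (maximalOp_le_of_norm_le (C := C) (fun y => by simpa using hC y) x).trans_lt
    ofReal_lt_top

end MaximalOp

section KernelClass

variable {d : ℕ} {k : EuclideanSpace ℝ (Fin d) → ℝ}

theorem MemK.ae_forall_lintegral_le_maximalOp_comp (hk : MemK k) {β : Type*}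
    (f : SimpleFunc (EuclideanSpace ℝ (Fin d)) β) :
    ∀ᵐ x, ∀ φ : β → ℂ,
      ∫⁻ y, ENNReal.ofReal |k (x - y)| * ‖φ (f y)‖₊ ≤ maximalOp (fun y => φ (f y)) x := by
  classical
  let ψ : (f.range → ℚ) → β → ℂ := fun q w =>
    if hw : w ∈ f.range then ((q ⟨w, hw⟩ : ℝ) : ℂ) else 0
  have hψ : ∀ᵐ x, ∀ q, ∫⁻ y, ENNReal.ofReal |k (x - y)| * ‖ψ q (f y)‖₊ ≤
      maximalOp (fun y => ψ q (f y)) x :=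
    ae_all_iff.2 fun q => hk.2 (f.map (ψ q))
  filter_upwards [hψ] with x hx φ
  refine ENNReal.le_of_forall_pos_le_add fun ε hε _ => ?_
  choose q hq_gt hq_lt using fun w : f.range =>
    exists_rat_btwn (lt_add_of_pos_right ‖φ w‖ (show (0 : ℝ) < ε from hε))
  have hψ_norm : ∀ y, ‖ψ q (f y)‖ = q ⟨f y, f.mem_range_self y⟩ := fun y => by
    simp only [ψ, dif_pos (f.mem_range_self y), Complex.norm_real, Real.norm_eq_abs,
      abs_of_pos ((norm_nonneg _).trans_lt (hq_gt _))]
  calc ∫⁻ y, ENNReal.ofReal |k (x - y)| * ‖φ (f y)‖₊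
      ≤ ∫⁻ y, ENNReal.ofReal |k (x - y)| * ‖ψ q (f y)‖₊ := by
        gcongr with y
        rw [← NNReal.coe_le_coe, coe_nnnorm, coe_nnnorm, hψ_norm]
        exact (hq_gt ⟨f y, f.mem_range_self y⟩).le
    _ ≤ maximalOp (fun y => ψ q (f y)) x := hx q
    _ ≤ maximalOp (fun y => φ (f y)) x + ε := by
        simpa only [ENNReal.ofReal_coe_nnreal] using maximalOp_le_add_of_norm_le_add
          (fun y => (hψ_norm y).trans_le (hq_lt _).le) x

theorem MemK.ae_forall_ofReal_abs_conv_le_latticeM (hk : MemK k) {α : Type*}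
    (f : SimpleFunc (EuclideanSpace ℝ (Fin d)) (α → ℝ)) :
    ∀ᵐ x, ∀ a, ENNReal.ofReal |∫ y, k (x - y) * f y a| ≤ latticeM (fun y => f y) x a := by
  filter_upwards [hk.ae_forall_lintegral_le_maximalOp_comp f] with x hx a
  calc ENNReal.ofReal |∫ y, k (x - y) * f y a|
      ≤ ∫⁻ y, ‖k (x - y) * f y a‖ₑ := by
        rw [← Real.norm_eq_abs, ofReal_norm]
        exact enorm_integral_le_lintegral_enorm _
    _ = ∫⁻ y, ENNReal.ofReal |k (x - y)| * ‖(fun w : α → ℝ => (w a : ℂ)) (f y)‖₊ := by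
        simp only [enorm_mul, Complex.nnnorm_real, ← Real.norm_eq_abs, ofReal_norm]
        rfl
    _ ≤ latticeM (fun y => f y) x a := by
        rw [latticeM_eq_maximalOp]
        exact hx fun w => (w a : ℂ)

end KernelClass

theorem lpNormX_mono {d : ℕ} {α : Type*} [MeasurableSpace α] {μ : Measure α}
    (X : BanachFunctionSpace α μ) {p : ℝ} (hp : 0 ≤ p)
    {f g : EuclideanSpace ℝ (Fin d) → α → ℝ} (h : ∀ᵐ x, ∀ᵐ a ∂μ, |f x a| ≤ |g x a|) :
    lpNormX X.N p f ≤ lpNormX X.N p g := by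
  refine ENNReal.rpow_le_rpow (lintegral_mono_ae ?_) (one_div_nonneg.2 hp)
  filter_upwards [h] with x hx
  exact ENNReal.rpow_le_rpow (X.mono hx) hp

theorem convolution_le_latticeM_general {d : ℕ} {α : Type*} [MeasurableSpace α] {μ : Measure α}
    (X : BanachFunctionSpace α μ)
    (p : ℝ) (hp : 1 < p) (A : ℝ≥0∞)
    (hM : ∀ f : EuclideanSpace ℝ (Fin d) → α → ℝ,
      lpNormX X.N p (fun x a => (latticeM f x a).toReal) ≤ A * lpNormX X.N p f)
    (k : EuclideanSpace ℝ (Fin d) → ℝ) (hk : MemK k)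
    (f : SimpleFunc (EuclideanSpace ℝ (Fin d)) (α → ℝ)) :
    (∀ᵐ x, ∀ᵐ a ∂μ,
      ENNReal.ofReal |∫ y, k (x - y) * f y a| ≤ latticeM (fun y => f y) x a) ∧
    lpNormX X.N p (fun x a => ∫ y, k (x - y) * f y a) ≤
      A * lpNormX X.N p (fun x => f x) := by
  have hconv := hk.ae_forall_ofReal_abs_conv_le_latticeM f
  refine ⟨hconv.mono fun x hx => ae_of_all μ hx,
    (lpNormX_mono X (by linarith) ?_).trans (hM _)⟩
  filter_upwards [hconv] with x hx
  refine ae_of_all μ fun a => ?_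
  exact ((ENNReal.ofReal_le_iff_le_toReal (f.latticeM_lt_top x a).ne).1 (hx a)).trans
    (le_abs_self _)

/-- If `X` is an order continuous Banach function space and the lattice maximal operator `M̃` is
bounded on `L^p(ℝ^d;X)` with norm `A`, then for every `k ∈ 𝒦` and every simple `f : ℝ^d → X`
one has `|k * f| ≤ M̃ f` pointwise a.e. (in the lattice sense), and consequently
`‖k * f‖_{L^p(ℝ^d;X)} ≤ A ‖f‖_{L^p(ℝ^d;X)}` uniformly in `k ∈ 𝒦`. -/
theorem convolution_le_latticeM {d : ℕ} {α : Type*} [MeasurableSpace α] {μ : Measure α}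
    (X : BanachFunctionSpace α μ) (hXoc : OrderCont X.N)
    (p : ℝ) (hp : 1 < p) (A : ℝ≥0∞)
    (hM : ∀ f : EuclideanSpace ℝ (Fin d) → α → ℝ,
      lpNormX X.N p (fun x a => (latticeM f x a).toReal) ≤ A * lpNormX X.N p f)
    (k : EuclideanSpace ℝ (Fin d) → ℝ) (hk : MemK k)
    (f : SimpleFunc (EuclideanSpace ℝ (Fin d)) (α → ℝ)) :
    (∀ᵐ x, ∀ᵐ a ∂μ,
      ENNReal.ofReal |∫ y, k (x - y) * f y a| ≤ latticeM (fun y => f y) x a) ∧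
    lpNormX X.N p (fun x a => ∫ y, k (x - y) * f y a) ≤
      A * lpNormX X.N p (fun x => f x) :=
  convolution_le_latticeM_general X p hp A hM k hk f
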